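/- arXiv:2106.01108 — 2 statements merged into one kernel-verified Lean document; each statement's English description precedes it below -/
import Mathlib

section
/- Let S be a connected shape in the triangular grid and let h be a hole point of S, i.e., a point lying in a finite connected component of the complement of S. Then there exist v₁, v₂ ∈ S such that h lies on a shortest path in G between v₁ and v₂, i.e., dist_G(v₁,h) + dist_G(h,v₂) = dist_G(v₁,v₂). -/
/-- The triangular grid: the simple graph on ℤ × ℤ where two vertices are adjacent
iff their difference lies in {(1,0),(−1,0),(0,1),(0,−1),(1,−1),(−1,1)}. -/
def triGrid : SimpleGraph (ℤ × ℤ) where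
  Adj u v := (u.1 - v.1, u.2 - v.2) ∈
    ({(1,0), (-1,0), (0,1), (0,-1), (1,-1), (-1,1)} : Set (ℤ × ℤ))
  symm := by
    constructor
    intro u v h
    simp only [Set.mem_insert_iff, Set.mem_singleton_iff, Prod.mk.injEq] at h ⊢
    omega
  loopless := by
    constructor
    intro u h
    simp only [Set.mem_insert_iff, Set.mem_singleton_iff, Prod.mk.injEq] at h
    omega

/-- The subgraph of the triangular grid induced by `S`, viewed as a graph on all of
ℤ × ℤ (vertices outside `S` are isolated): an edge requires both endpoints in `S`. -/
def gOn (S : Set (ℤ × ℤ)) : SimpleGraph (ℤ × ℤ) where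
  Adj u v := triGrid.Adj u v ∧ u ∈ S ∧ v ∈ S
  symm := ⟨fun u v h => ⟨triGrid.adj_symm h.1, h.2.2, h.2.1⟩⟩
  loopless := ⟨fun u h => triGrid.loopless.irrefl u h.1⟩

/-- A shape: a finite nonempty set of grid points. -/
def IsShape (S : Set (ℤ × ℤ)) : Prop := S.Finite ∧ S.Nonempty

/-- The subgraph of the grid induced by `S` is connected. -/
def ShapeConnected (S : Set (ℤ × ℤ)) : Prop :=
  ∀ u ∈ S, ∀ v ∈ S, (gOn S).Reachable u v

/-- A connected shape. -/
def ConnectedShape (S : Set (ℤ × ℤ)) : Prop := IsShape S ∧ ShapeConnected S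

/-- The connected component of `x` in the subgraph induced by the complement of `S`. -/
def compOf (S : Set (ℤ × ℤ)) (x : ℤ × ℤ) : Set (ℤ × ℤ) :=
  {y | (gOn Sᶜ).Reachable x y}

/-- A hole point of `S`: a point lying in a finite connected component of the
complement of `S`. -/
def IsHolePoint (S : Set (ℤ × ℤ)) (x : ℤ × ℤ) : Prop :=
  x ∉ S ∧ (compOf S x).Finite

/-- A simply-connected shape: connected and with no holes. -/
def SimplyConnectedShape (S : Set (ℤ × ℤ)) : Prop :=
  ConnectedShape S ∧ ∀ x, ¬ IsHolePoint S x

/-- Graph distance within the subgraph induced by `S`. -/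
noncomputable def distS (S : Set (ℤ × ℤ)) (u v : ℤ × ℤ) : ℕ := (gOn S).dist u v

/-- Diameter of the shape `S` w.r.t. `distS`. -/
noncomputable def shapeDiam (S : Set (ℤ × ℤ)) : ℕ :=
  sSup {d : ℕ | ∃ u ∈ S, ∃ v ∈ S, distS S u v = d}

/-- A boundary point of `S`: a point of `S` with a neighbor outside `S`. -/
def IsBoundaryPt (S : Set (ℤ × ℤ)) (v : ℤ × ℤ) : Prop :=
  v ∈ S ∧ ∃ w, triGrid.Adj v w ∧ w ∉ S

/-- An outer boundary point of `S`: a point of `S` with a neighbor lying in an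
infinite connected component of the complement of `S`. -/
def IsOuterBoundaryPt (S : Set (ℤ × ℤ)) (v : ℤ × ℤ) : Prop :=
  v ∈ S ∧ ∃ w, triGrid.Adj v w ∧ w ∉ S ∧ (compOf S w).Infinite

/-- An interior point of `S`: a point of `S` all of whose neighbors lie in `S`. -/
def IsInteriorPt (S : Set (ℤ × ℤ)) (v : ℤ × ℤ) : Prop :=
  v ∈ S ∧ ∀ w, triGrid.Adj v w → w ∈ S

/-- The six neighbor directions of a grid point, in cyclic order. -/
def dirs : Fin 6 → ℤ × ℤ := ![(1,0), (0,1), (-1,1), (-1,0), (0,-1), (1,-1)]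

/-- The `i`-th neighbor of `v`, in the cyclic order of the 6-cycle of neighbors. -/
def nbr (v : ℤ × ℤ) (i : Fin 6) : ℤ × ℤ := (v.1 + (dirs i).1, v.2 + (dirs i).2)

/-- The neighbors of `v` lying in `S`. -/
def nbrsIn (S : Set (ℤ × ℤ)) (v : ℤ × ℤ) : Set (ℤ × ℤ) :=
  {w | triGrid.Adj v w ∧ w ∈ S}

/-- `v` is redundant w.r.t. `S`: the neighbors of `v` in `S` induce a connected
subgraph of the grid. -/
def Redundant (S : Set (ℤ × ℤ)) (v : ℤ × ℤ) : Prop :=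
  ∀ u ∈ nbrsIn S v, ∀ w ∈ nbrsIn S v, (gOn (nbrsIn S v)).Reachable u w

/-- `v` is erodable w.r.t. `S`: redundant and an outer boundary point of `S`. -/
def Erodable (S : Set (ℤ × ℤ)) (v : ℤ × ℤ) : Prop :=
  Redundant S v ∧ IsOuterBoundaryPt S v

open Fin.NatCast in
/-- A set of indices of neighbors that is an arc: a nonempty set of consecutive
positions in the cyclic order. -/
def IsArc (I : Set (Fin 6)) : Prop :=
  ∃ (a : Fin 6) (len : ℕ), 0 < len ∧ len ≤ 6 ∧
    I = {i | ∃ k : ℕ, k < len ∧ i = a + (k : Fin 6)}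

/-- The index set of the neighbors of `v` lying outside `S`. -/
def outIdx (S : Set (ℤ × ℤ)) (v : ℤ × ℤ) : Set (Fin 6) := {i | nbr v i ∉ S}

/-- A maximal arc of `v` w.r.t. `S`: a maximal arc of consecutive neighbors of `v`
none of which lies in `S`. -/
def IsMaximalArc (S : Set (ℤ × ℤ)) (v : ℤ × ℤ) (I : Set (Fin 6)) : Prop :=
  IsArc I ∧ (∀ i ∈ I, nbr v i ∉ S) ∧
  ∀ J : Set (Fin 6), IsArc J → (∀ i ∈ J, nbr v i ∉ S) → I ⊆ J → I = J

/-- `v` is SCE (strictly convex and erodable) w.r.t. `S`: the neighbors of `v`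
outside `S` form a single (maximal) arc of at least 3 points, and some neighbor of
`v` lies in an infinite connected component of the complement of `S`. -/
def SCE (S : Set (ℤ × ℤ)) (v : ℤ × ℤ) : Prop :=
  IsArc (outIdx S v) ∧ 3 ≤ (outIdx S v).ncard ∧
  ∃ i : Fin 6, nbr v i ∉ S ∧ (compOf S (nbr v i)).Infinite

/-- The level set `L_i` of `l` in `S`. -/
noncomputable def levelSet (S : Set (ℤ × ℤ)) (l : ℤ × ℤ) (i : ℕ) : Set (ℤ × ℤ) :=
  {u ∈ S | distS S l u = i}

/-- The closed neighborhood `N_i` of `l` in `S`. -/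
noncomputable def closedNbhd (S : Set (ℤ × ℤ)) (l : ℤ × ℤ) (i : ℕ) : Set (ℤ × ℤ) :=
  {u ∈ S | distS S l u ≤ i}

/-- `v ∈ L_i` is `(i,k)`-SCE-related: some `u ∈ L_i` is SCE w.r.t. `N_i` and is at
distance at most `k` from `v` within the subgraph induced by `L_i`. -/
noncomputable def SCERelated (S : Set (ℤ × ℤ)) (l : ℤ × ℤ) (i k : ℕ) (v : ℤ × ℤ) : Prop :=
  ∃ u ∈ levelSet S l i, SCE (closedNbhd S l i) u ∧
    (gOn (levelSet S l i)).Reachable v u ∧ (gOn (levelSet S l i)).dist v u ≤ k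

lemma triAdj_right (a b : ℤ) : triGrid.Adj (a, b) (a + 1, b) := by
  show ((a - (a+1), b - b) ∈ _)
  simp only [Set.mem_insert_iff, Set.mem_singleton_iff, Prod.mk.injEq]
  omega

lemma triAdj_left (a b : ℤ) : triGrid.Adj (a, b) (a - 1, b) := by
  show ((a - (a-1), b - b) ∈ _)
  simp only [Set.mem_insert_iff, Set.mem_singleton_iff, Prod.mk.injEq]
  omega

lemma tri_walk_exists (a b : ℤ) (n : ℕ) :
    ∃ w : triGrid.Walk (a, b) (a + n, b), w.length = n := by
  induction n with
  | zero =>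
      refine ⟨(SimpleGraph.Walk.nil : triGrid.Walk (a, b) (a, b)).copy rfl (by push_cast; simp), ?_⟩
      simp
  | succ n ih =>
      obtain ⟨w, hw⟩ := ih
      have hadj : triGrid.Adj (a + n, b) (a + (n+1 : ℕ), b) := by
        have := triAdj_right (a + n) b
        convert this using 2
        push_cast; ring
      exact ⟨w.concat hadj, by simp [hw]⟩

lemma tri_dist_le_right (a b : ℤ) (n : ℕ) : triGrid.dist (a, b) (a + n, b) ≤ n := by
  obtain ⟨w, hw⟩ := tri_walk_exists a b n
  have := SimpleGraph.dist_le w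
  omega

lemma tri_walk_lip : ∀ {u v : ℤ × ℤ} (w : triGrid.Walk u v), (v.1 - u.1).natAbs ≤ w.length := by
  intro u v w
  induction w with
  | nil => simp
  | @cons u x v hadj p ih =>
      simp only [SimpleGraph.Walk.length_cons]
      have h1 : u.1 - x.1 = 1 ∨ u.1 - x.1 = -1 ∨ u.1 - x.1 = 0 := by
        simp only [triGrid, Set.mem_insert_iff, Set.mem_singleton_iff, Prod.mk.injEq] at hadj
        omega
      omega

lemma tri_dist_right (a b : ℤ) (n : ℕ) : triGrid.dist (a, b) (a + n, b) = n := by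
  refine le_antisymm (tri_dist_le_right a b n) ?_
  have hr : triGrid.Reachable (a, b) (a + n, b) := by
    induction n with
    | zero =>
        have : ((a + (0:ℕ), b) : ℤ × ℤ) = (a, b) := by push_cast; simp
        rw [this]
    | succ n ih =>
        refine ih.trans (SimpleGraph.Adj.reachable ?_)
        have := triAdj_right (a + n) b
        convert this using 2
        push_cast; ring
  obtain ⟨p, hp⟩ := hr.exists_walk_length_eq_dist
  have := tri_walk_lip p
  simp only [hp] at this
  simpa using this

/-- there is a point of S to the right of h on its horizontal line -/
lemma exists_right (S : Set (ℤ × ℤ)) (h : ℤ × ℤ) (hh : IsHolePoint S h) :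
    ∃ n : ℕ, (h.1 + n, h.2) ∈ S := by
  by_contra hc
  push_neg at hc
  have hsub : Set.range (fun n : ℕ => ((h.1 + n, h.2) : ℤ × ℤ)) ⊆ compOf S h := by
    rintro _ ⟨n, rfl⟩
    induction n with
    | zero =>
        show (gOn Sᶜ).Reachable h (h.1 + (0:ℕ), h.2)
        have : ((h.1 + (0:ℕ), h.2) : ℤ × ℤ) = h := by push_cast; simp
        rw [this]
    | succ n ih =>
        refine SimpleGraph.Reachable.trans ih (SimpleGraph.Adj.reachable ?_)
        refine ⟨?_, hc n, ?_⟩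
        · have := triAdj_right (h.1 + n) h.2
          convert this using 2
          push_cast; ring
        · exact hc (n+1)
  have hinj : Function.Injective (fun n : ℕ => ((h.1 + n, h.2) : ℤ × ℤ)) := by
    intro m n hmn
    simp only [Prod.mk.injEq] at hmn
    omega
  exact (Set.infinite_range_of_injective hinj).mono hsub hh.2

lemma exists_left (S : Set (ℤ × ℤ)) (h : ℤ × ℤ) (hh : IsHolePoint S h) :
    ∃ n : ℕ, (h.1 - n, h.2) ∈ S := by
  by_contra hc
  push_neg at hc
  have hsub : Set.range (fun n : ℕ => ((h.1 - n, h.2) : ℤ × ℤ)) ⊆ compOf S h := by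
    rintro _ ⟨n, rfl⟩
    induction n with
    | zero =>
        show (gOn Sᶜ).Reachable h (h.1 - (0:ℕ), h.2)
        have : ((h.1 - (0:ℕ), h.2) : ℤ × ℤ) = h := by push_cast; simp
        rw [this]
    | succ n ih =>
        refine SimpleGraph.Reachable.trans ih (SimpleGraph.Adj.reachable ?_)
        refine ⟨?_, hc n, ?_⟩
        · have := triAdj_left (h.1 - n) h.2
          convert this using 2
          push_cast; ring
        · exact hc (n+1)
  have hinj : Function.Injective (fun n : ℕ => ((h.1 - n, h.2) : ℤ × ℤ)) := by
    intro m n hmn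
    simp only [Prod.mk.injEq] at hmn
    omega
  exact (Set.infinite_range_of_injective hinj).mono hsub hh.2


/-- Any hole point `h` of a connected shape `S` lies on a shortest
path in the grid between two points of `S`. -/
theorem stmt2 (S : Set (ℤ × ℤ)) (hS : ConnectedShape S) (h : ℤ × ℤ)
    (hh : IsHolePoint S h) :
    ∃ v₁ ∈ S, ∃ v₂ ∈ S,
      triGrid.dist v₁ h + triGrid.dist h v₂ = triGrid.dist v₁ v₂ := by
  obtain ⟨k, hk⟩ := exists_right S h hh
  obtain ⟨m, hm⟩ := exists_left S h hh
  refine ⟨(h.1 - m, h.2), hm, (h.1 + k, h.2), hk, ?_⟩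
  have d1 : triGrid.dist (h.1 - m, h.2) h = m := by
    have := tri_dist_right (h.1 - m) h.2 m
    simpa using this
  have d2 : triGrid.dist h (h.1 + k, h.2) = k := by
    have := tri_dist_right h.1 h.2 k
    simpa using this
  have d3 : triGrid.dist (h.1 - m, h.2) (h.1 + k, h.2) = m + k := by
    have := tri_dist_right (h.1 - m) h.2 (m + k)
    simp only [Nat.cast_add] at this
    convert this using 3
    ring
  rw [d1, d2, d3]
end

section
/- Let S be a simply-connected shape in the triangular grid with at least two points, and let v ∈ S be erodable w.r.t. S. Then S \ {v} is simply-connected. -/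
lemma gOn_mono {A B : Set (ℤ × ℤ)} (h : A ⊆ B) : gOn A ≤ gOn B :=
  fun _ _ ha => ⟨ha.1, h ha.2.1, h ha.2.2⟩

lemma nbrsIn_subset_diff (S : Set (ℤ × ℤ)) (v : ℤ × ℤ) :
    nbrsIn S v ⊆ S \ {v} := by
  rintro w ⟨hadj, hw⟩
  exact ⟨hw, by simpa using (hadj.ne).symm⟩

lemma avoid_v (S : Set (ℤ × ℤ)) (v : ℤ × ℤ) (hred : Redundant S v) :
    ∀ n, ∀ u w : ℤ × ℤ, ∀ W : (gOn S).Walk u w, W.length ≤ n → u ≠ v → w ≠ v →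
      (gOn (S \ {v})).Reachable u w := by
  intro n
  induction n with
  | zero =>
    intro u w W hlen hu hw
    cases W with
    | nil => exact SimpleGraph.Reachable.refl _
    | cons h W' => simp [SimpleGraph.Walk.length_cons] at hlen
  | succ n ih =>
    intro u w W hlen hu hw
    cases W with
    | nil => exact SimpleGraph.Reachable.refl _
    | @cons _ b _ h W' =>
      by_cases hb : b = v
      · subst b
        cases W' with
        | nil => exact absurd rfl hw
        | @cons _ c _ h' W'' =>
          have hu' : u ∈ nbrsIn S v := ⟨triGrid.adj_symm h.1, h.2.1⟩
          have hc' : c ∈ nbrsIn S v := ⟨h'.1, h'.2.2⟩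
          have r1 : (gOn (S \ {v})).Reachable u c :=
            (hred u hu' c hc').mono (gOn_mono (nbrsIn_subset_diff S v))
          have hcv : c ≠ v := h'.ne.symm
          have hlen' : W''.length ≤ n := by
            simp [SimpleGraph.Walk.length_cons] at hlen; omega
          exact r1.trans (ih c w W'' hlen' hcv hw)
      · have hadj : (gOn (S \ {v})).Adj u b :=
          ⟨h.1, ⟨h.2.1, by simpa using hu⟩, ⟨h.2.2, by simpa using hb⟩⟩
        have hlen' : W'.length ≤ n := by
          simp [SimpleGraph.Walk.length_cons] at hlen; omega
        exact hadj.reachable.trans (ih b w W' hlen' hb hw)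

/-- Removing an erodable point from a simply-connected shape with at
least two points leaves a simply-connected shape. -/
theorem stmt3 (S : Set (ℤ × ℤ)) (hS : SimplyConnectedShape S) (h2 : 2 ≤ S.ncard)
    (v : ℤ × ℤ) (hv : v ∈ S) (he : Erodable S v) :
    SimplyConnectedShape (S \ {v}) := by
  obtain ⟨⟨⟨hfin, _⟩, hconn⟩, hnohole⟩ := hS
  obtain ⟨hred, _, w₀, hadj₀, hw₀S, hw₀inf⟩ := he
  refine ⟨⟨⟨hfin.subset Set.diff_subset, ?_⟩, ?_⟩, ?_⟩
  · -- nonempty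
    have : 1 ≤ (S \ {v}).ncard := by
      have := Set.ncard_diff_singleton_of_mem hv
      omega
    exact Set.nonempty_of_ncard_ne_zero (by omega)
  · -- connected
    rintro u ⟨huS, huv⟩ w ⟨hwS, hwv⟩
    obtain ⟨W⟩ := hconn u huS w hwS
    exact avoid_v S v hred W.length u w W le_rfl (by simpa using huv) (by simpa using hwv)
  · -- no holes
    rintro x ⟨hxS, hxfin⟩
    have hmono : gOn Sᶜ ≤ gOn (S \ {v})ᶜ :=
      gOn_mono (Set.compl_subset_compl.mpr Set.diff_subset)
    by_cases hxv : x = v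
    · have rxw : (gOn (S \ {v})ᶜ).Reachable x w₀ := by
        subst hxv
        refine SimpleGraph.Adj.reachable ⟨hadj₀, ?_, ?_⟩
        · simp
        · simp [Set.mem_compl_iff, Set.mem_diff]; intro h; exact absurd h hw₀S
      have hsub : compOf S w₀ ⊆ compOf (S \ {v}) x := by
        intro y hy
        exact rxw.trans (hy.mono hmono)
      exact (hw₀inf.mono hsub) hxfin
    · have hxS' : x ∉ S := by
        intro h; exact hxS ⟨h, by simpa using hxv⟩
      have hinf : (compOf S x).Infinite := by
        by_contra hfin'
        exact hnohole x ⟨hxS', Set.not_infinite.mp hfin'⟩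
      have hsub : compOf S x ⊆ compOf (S \ {v}) x := fun y hy => hy.mono hmono
      exact (hinf.mono hsub) hxfin
end
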